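/- For all x, y ∈ ℝ, the functions b and s satisfy the identity s_{xx}(x,y)·s(x,y) − s_x(x,y)² = −s(−x,−y)·b(x,y). -/

import Mathlib

/-- First partial derivative (with respect to the first variable) of a function of two
real variables. -/
noncomputable def pd1 (f : ℝ → ℝ → ℝ) (x y : ℝ) : ℝ := deriv (fun t => f t y) x

/-- Second partial derivative (with respect to the second variable) of a function of two
real variables. -/
noncomputable def pd2 (f : ℝ → ℝ → ℝ) (x y : ℝ) : ℝ := deriv (fun t => f x t) y

/-- The blow-up series `b(t₂,t₃)` of the U(3) blow-up formula for manifolds of simple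
type. -/
noncomputable def bFun (x y : ℝ) : ℝ :=
  (1 / 3) * Real.exp (-x ^ 2 / 2 + y ^ 2) *
    (Real.cosh (Real.sqrt 3 * x) + 2 * Real.cos (Real.sqrt 3 * y))

/-- The blow-up series `s(t₂,t₃)` of the U(3) blow-up formula for manifolds of simple
type. -/
noncomputable def sFun (x y : ℝ) : ℝ :=
  (1 / 3) * Real.exp (-x ^ 2 / 2 + y ^ 2) *
    (Real.cosh (Real.sqrt 3 * x) - Real.cos (Real.sqrt 3 * y) +
      Real.sqrt 3 * Real.sin (Real.sqrt 3 * y))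

/-!
Write `s(·, y) = E · P` with `E(t) = exp(-t²/2 + y²)`. Since `(log E)'' = -1`, the quantity
`s'' s - s'²` equals `E² (P'' P - P'² - P²)`. For `P = (cosh(√3 t) + k) / 3` with
`k = √3 sin(√3 y) - cos(√3 y)` this is an explicit trigonometric expression, which matches
`-s(-x,-y) b(x,y)` by `cosh² - sinh² = 1`, `sin² + cos² = 1` and `√3² = 3`.
-/

open Real

section GaussianWeight

variable {c x : ℝ} {P : ℝ → ℝ}

theorem hasDerivAt_exp_neg_sq_half_add_mul {p : ℝ} (hP : HasDerivAt P p x) :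
    HasDerivAt (fun t => exp (-t ^ 2 / 2 + c) * P t) (exp (-x ^ 2 / 2 + c) * (p - x * P x)) x := by
  have hE : HasDerivAt (fun t : ℝ => -t ^ 2 / 2 + c) (-x) x := by
    refine (((hasDerivAt_pow 2 x).neg.div_const 2).add_const c).congr_deriv ?_
    ring
  refine (hE.exp.mul hP).congr_deriv ?_
  ring

theorem deriv_deriv_exp_neg_sq_half_add_mul {P' : ℝ → ℝ} {p'' : ℝ}
    (hP : ∀ t, HasDerivAt P (P' t) t) (hP' : HasDerivAt P' p'' x) :
    deriv (deriv fun t => exp (-t ^ 2 / 2 + c) * P t) x * (exp (-x ^ 2 / 2 + c) * P x) -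
        deriv (fun t => exp (-t ^ 2 / 2 + c) * P t) x ^ 2 =
      exp (-x ^ 2 / 2 + c) ^ 2 * (p'' * P x - P' x ^ 2 - P x ^ 2) := by
  have hf : deriv (fun t => exp (-t ^ 2 / 2 + c) * P t) =
      fun t => exp (-t ^ 2 / 2 + c) * (P' t - t * P t) :=
    funext fun t => (hasDerivAt_exp_neg_sq_half_add_mul (hP t)).deriv
  have hg : HasDerivAt (fun t => exp (-t ^ 2 / 2 + c) * (P' t - t * P t))
      (exp (-x ^ 2 / 2 + c) * (p'' - (1 * P x + x * P' x) - x * (P' x - x * P x))) x :=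
    hasDerivAt_exp_neg_sq_half_add_mul (hP'.sub ((hasDerivAt_id' x).mul (hP x)))
  rw [hf, hg.deriv]
  ring

end GaussianWeight

theorem hasDerivAt_cosh_mul_add_div (ω k a x : ℝ) :
    HasDerivAt (fun t => (cosh (ω * t) + k) / a) (ω * sinh (ω * x) / a) x := by
  refine ((((hasDerivAt_id' x).const_mul ω).cosh.add_const k).div_const a).congr_deriv ?_
  ring

theorem hasDerivAt_sinh_mul_div (ω a x : ℝ) :
    HasDerivAt (fun t => ω * sinh (ω * t) / a) (ω ^ 2 * cosh (ω * x) / a) x := by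
  refine ((((hasDerivAt_id' x).const_mul ω).sinh.const_mul ω).div_const a).congr_deriv ?_
  ring

theorem sFun_eq_exp_mul (y : ℝ) :
    (fun t => sFun t y) = fun t => exp (-t ^ 2 / 2 + y ^ 2) *
      ((cosh (√3 * t) + (-cos (√3 * y) + √3 * sin (√3 * y))) / 3) := by
  funext t
  simp only [sFun]
  ring

theorem stmt3 (x y : ℝ) :
    pd1 (pd1 sFun) x y * sFun x y - (pd1 sFun x y) ^ 2 = -(sFun (-x) (-y) * bFun x y) := by
  change deriv (deriv fun t => sFun t y) x * (fun t => sFun t y) x -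
    deriv (fun t => sFun t y) x ^ 2 = _
  rw [sFun_eq_exp_mul, deriv_deriv_exp_neg_sq_half_add_mul (hasDerivAt_cosh_mul_add_div _ _ _)
    (hasDerivAt_sinh_mul_div _ _ x)]
  simp only [sFun, bFun, neg_sq, mul_neg, cosh_neg, cos_neg, sin_neg]
  have h3 : √3 ^ 2 = 3 := sq_sqrt (by norm_num)
  linear_combination (exp (-x ^ 2 / 2 + y ^ 2) ^ 2 / 9) *
    ((cosh (√3 * x) ^ 2 - sinh (√3 * x) ^ 2 - sin (√3 * y) ^ 2 +
        (√3 * sin (√3 * y) - cos (√3 * y)) * cosh (√3 * x)) * h3 +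
      3 * cosh_sq_sub_sinh_sq (√3 * x) - 3 * sin_sq_add_cos_sq (√3 * y))
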